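/- Let K be algebraically closed of characteristic zero and suppose every automorphism of A_Γ is induced by a symmetry of Γ. Then the following are equivalent: (1) Aut(A_Γ) ≅ Sym(Γ); (2) the diagonal subgroup D is trivial; (3) Γ is not bipartite. -/
import Mathlib


/-- The evolution algebra product of the graph `G`: basis vectors multiply by
`e_i · e_j = 0` for `i ≠ j` and `e_i ^ 2 = ∑_{ℓ ∈ N(i)} e_ℓ`. -/
def evMul {V K : Type*} [Fintype V] [Field K] (G : SimpleGraph V) [DecidableRel G.Adj]
    (x y : V → K) : V → K :=
  fun m => ∑ i, x i * y i * (if G.Adj i m then 1 else 0)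

/-- `f` is an algebra automorphism of the evolution algebra of `G`. -/
def IsEvAut {V K : Type*} [Fintype V] [Field K] (G : SimpleGraph V) [DecidableRel G.Adj]
    (f : (V → K) → (V → K)) : Prop :=
  Function.Bijective f ∧ IsLinearMap K f ∧ ∀ x y, f (evMul G x y) = evMul G (f x) (f y)

set_option linter.unusedSectionVars false

section Aux

variable {V K : Type*} [Fintype V] [DecidableEq V] [Field K]
variable (G : SimpleGraph V) [DecidableRel G.Adj]

lemma single_eq_of_smul_eq {a b : V} {c d : K} (hc : c ≠ 0)
    (h : c • (Pi.single a 1 : V → K) = d • (Pi.single b 1 : V → K)) : a = b := by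
  by_contra hne
  have h2 := congrFun h a
  rw [Pi.smul_apply, Pi.smul_apply, Pi.single_eq_same, Pi.single_eq_of_ne hne] at h2
  simp at h2
  exact hc h2

lemma apply_eq_sum {f : (V → K) → (V → K)} (hf : IsLinearMap K f) (x : V → K) :
    f x = ∑ i, x i • f (Pi.single i 1) := by
  have h1 : ∀ i : V, x i • (Pi.single i 1 : V → K) = Pi.single i (x i) := by
    intro i; rw [← Pi.single_smul, smul_eq_mul, mul_one]
  have hx : ∑ i, x i • (Pi.single i 1 : V → K) = x := by
    simp_rw [h1]; exact Finset.univ_sum_single x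
  calc f x = (hf.mk' f) (∑ i, x i • (Pi.single i 1 : V → K)) := by rw [hx]; rfl
    _ = ∑ i, x i • f (Pi.single i 1) := by
        rw [map_sum]
        exact Finset.sum_congr rfl fun i _ => by rw [map_smul]; rfl

lemma diag_apply {f : (V → K) → (V → K)} (hf : IsLinearMap K f) {t : V → K}
    (ht : ∀ i, f (Pi.single i 1) = t i • (Pi.single i 1 : V → K)) (x : V → K) :
    f x = fun m => t m * x m := by
  rw [apply_eq_sum hf]
  funext m
  rw [Finset.sum_apply]
  simp_rw [ht]
  rw [Finset.sum_eq_single m]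
  · simp [mul_comm]
  · intro b _ hb
    simp [Pi.single_eq_of_ne (Ne.symm hb)]
  · intro h; exact absurd (Finset.mem_univ m) h

lemma evMul_single (i : V) (c d : K) (m : V) :
    evMul G (c • (Pi.single i 1 : V → K)) (d • (Pi.single i 1 : V → K)) m
      = c * d * (if G.Adj i m then 1 else 0) := by
  unfold evMul
  rw [Finset.sum_eq_single i]
  · simp
  · intro b _ hb
    simp [Pi.single_eq_of_ne hb]
  · intro h; exact absurd (Finset.mem_univ i) h

lemma diag_edge {f : (V → K) → (V → K)} (hf : IsEvAut G f) {t : V → K}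
    (ht : ∀ i, f (Pi.single i 1) = t i • (Pi.single i 1 : V → K)) :
    ∀ i m, G.Adj i m → t i * t i = t m := by
  intro i m him
  have hmul0 := congrFun (hf.2.2 (Pi.single i 1) (Pi.single i 1)) m
  rw [diag_apply hf.2.1 ht (evMul G (Pi.single i 1) (Pi.single i 1)), ht i] at hmul0
  have hmul : t m * evMul G (Pi.single i 1) (Pi.single i 1) m
      = evMul G (t i • (Pi.single i 1 : V → K)) (t i • (Pi.single i 1 : V → K)) m := hmul0
  rw [evMul_single G i (t i) (t i) m, if_pos him, mul_one] at hmul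
  have h1 : evMul G (Pi.single i (1:K)) (Pi.single i 1) m = 1 := by
    have h2 := evMul_single G i (1 : K) (1 : K) m
    rw [one_smul] at h2
    rw [h2, if_pos him]; ring
  rw [h1, mul_one] at hmul
  exact hmul.symm

lemma diag_isEvAut (t : V → K) (h0 : ∀ i, t i ≠ 0)
    (hE : ∀ i m, G.Adj i m → t i * t i = t m) :
    IsEvAut G (fun x m => t m * x m) := by
  refine ⟨⟨?_, ?_⟩, ⟨?_, ?_⟩, ?_⟩
  · intro x y h
    funext m
    exact mul_left_cancel₀ (h0 m) (congrFun h m)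
  · intro y
    refine ⟨fun m => (t m)⁻¹ * y m, ?_⟩
    funext m
    show t m * ((t m)⁻¹ * y m) = y m
    rw [← mul_assoc, mul_inv_cancel₀ (h0 m), one_mul]
  · intro x y; funext m; simp [mul_add]
  · intro c x; funext m; simp only [Pi.smul_apply, smul_eq_mul]; ring
  · intro x y
    funext m
    show t m * evMul G x y m = _
    unfold evMul
    rw [Finset.mul_sum]
    apply Finset.sum_congr rfl
    intro i _
    by_cases h : G.Adj i m
    · rw [if_pos h, ← hE i m h]; ring
    · rw [if_neg h]; ring

lemma id_isEvAut : IsEvAut G (id : (V → K) → (V → K)) :=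
  ⟨Function.bijective_id, ⟨fun _ _ => rfl, fun _ _ => rfl⟩, fun _ _ => rfl⟩

lemma comp_isEvAut {f g : (V → K) → (V → K)} (hf : IsEvAut G f) (hg : IsEvAut G g) :
    IsEvAut G (f ∘ g) := by
  refine ⟨hf.1.comp hg.1, ⟨?_, ?_⟩, ?_⟩
  · intro x y
    show f (g (x + y)) = f (g x) + f (g y)
    rw [hg.2.1.map_add, hf.2.1.map_add]
  · intro c x
    show f (g (c • x)) = c • f (g x)
    rw [hg.2.1.map_smul, hf.2.1.map_smul]
  · intro x y
    show f (g (evMul G x y)) = evMul G (f (g x)) (f (g y))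
    rw [hg.2.2, hf.2.2]

lemma inv_isEvAut {f g : (V → K) → (V → K)} (hf : IsEvAut G f)
    (hgf : ∀ x, g (f x) = x) (hfg : ∀ x, f (g x) = x) : IsEvAut G g := by
  have hinj := hf.1.1
  refine ⟨Function.bijective_iff_has_inverse.mpr ⟨f, hfg, hgf⟩, ⟨?_, ?_⟩, ?_⟩
  · intro x y
    apply hinj
    rw [hfg, hf.2.1.map_add, hfg, hfg]
  · intro c x
    apply hinj
    rw [hfg, hf.2.1.map_smul, hfg]
  · intro x y
    apply hinj
    rw [hfg, hf.2.2, hfg, hfg]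

lemma perm_adj (σ : G ≃g G) (i m : V) : G.Adj (σ i) m ↔ G.Adj i (σ.symm m) := by
  conv_lhs => rw [← σ.apply_symm_apply m]
  exact σ.map_rel_iff

lemma perm_isEvAut (σ : G ≃g G) : IsEvAut G (fun (x : V → K) m => x (σ.symm m)) := by
  refine ⟨⟨?_, ?_⟩, ⟨fun _ _ => rfl, fun _ _ => rfl⟩, ?_⟩
  · intro x y h
    funext m
    simpa using congrFun h (σ m)
  · intro y
    exact ⟨fun m => y (σ m), funext fun m => by simp⟩
  · intro x y
    funext m
    show evMul G x y (σ.symm m) = _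
    unfold evMul
    refine Fintype.sum_equiv σ.toEquiv _ _ ?_
    intro i
    show x i * y i * _ = x (σ.symm (σ i)) * y (σ.symm (σ i)) * _
    rw [σ.symm_apply_apply]
    congr 1
    simp [perm_adj G σ i m]

lemma perm_single (σ : G ≃g G) (i : V) :
    (fun m => (Pi.single i 1 : V → K) (σ.symm m)) = (1 : K) • (Pi.single (σ i) 1 : V → K) := by
  funext m
  rw [one_smul]
  by_cases h : m = σ i
  · subst h
    rw [σ.symm_apply_apply, Pi.single_eq_same, Pi.single_eq_same]
  · rw [Pi.single_eq_of_ne h, Pi.single_eq_of_ne]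
    intro he
    exact h (by rw [← he, σ.apply_symm_apply])

lemma sigma_diag_apply {g : (V → K) → (V → K)} (hlin : IsLinearMap K g) (σ : G ≃g G)
    (ν : V → K) (hgν : ∀ i, g (Pi.single i 1) = ν i • (Pi.single (σ i) 1 : V → K))
    (x : V → K) (m : V) : g x m = ν (σ.symm m) * x (σ.symm m) := by
  rw [apply_eq_sum hlin, Finset.sum_apply]
  simp_rw [hgν]
  rw [Finset.sum_eq_single (σ.symm m)]
  · rw [Pi.smul_apply, Pi.smul_apply, σ.apply_symm_apply, Pi.single_eq_same]
    simp [mul_comm]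
  · intro b _ hb
    have hm : m ≠ σ b := by
      intro h
      exact hb (by rw [h, σ.symm_apply_apply])
    rw [Pi.smul_apply, Pi.smul_apply, Pi.single_eq_of_ne hm]
    simp
  · intro h; exact absurd (Finset.mem_univ _) h

end Aux

/-- Over an algebraically closed field of characteristic zero, if every automorphism of
`A_Γ` is induced by a symmetry of `Γ`, the following are equivalent:
(1) `Aut(A_Γ) ≅ Sym(Γ)` as groups;
(2) the diagonal subgroup is trivial;
(3) `Γ` is not bipartite. -/
theorem aut_iso_sym_iff_not_bipartite {V K : Type*} [Fintype V] [DecidableEq V] [Field K]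
    [CharZero K] [IsAlgClosed K]
    (G : SimpleGraph V) [DecidableRel G.Adj] (hconn : G.Connected)
    (hind : ∀ f : (V → K) → (V → K), IsEvAut G f →
      ∃ (σ : G ≃g G) (μ : V → K), (∀ i, μ i ≠ 0) ∧
        ∀ i, f (Pi.single i 1) = μ i • (Pi.single (σ i) 1 : V → K)) :
    ((∃ φ : {f : (V → K) → (V → K) // IsEvAut G f} ≃ (G ≃g G),
        ∀ f g h : {f : (V → K) → (V → K) // IsEvAut G f},
          (h : (V → K) → (V → K)) = (f : (V → K) → (V → K)) ∘ (g : (V → K) → (V → K)) →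
            φ h = φ f * φ g) ↔
      (∀ (f : (V → K) → (V → K)), IsEvAut G f → ∀ t : V → K, (∀ i, t i ≠ 0) →
        (∀ i, f (Pi.single i 1) = t i • (Pi.single i 1 : V → K)) → f = id)) ∧
    ((∀ (f : (V → K) → (V → K)), IsEvAut G f → ∀ t : V → K, (∀ i, t i ≠ 0) →
        (∀ i, f (Pi.single i 1) = t i • (Pi.single i 1 : V → K)) → f = id) ↔
      ¬ G.Colorable 2) := by
  classical
  have hσ : ∀ f : {f : (V → K) → (V → K) // IsEvAut G f}, ∃ σ : G ≃g G, ∃ μ : V → K,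
      (∀ i, μ i ≠ 0) ∧ ∀ i, (f : (V → K) → (V → K)) (Pi.single i 1)
        = μ i • (Pi.single (σ i) 1 : V → K) := fun f => hind f f.2
  let p : {f : (V → K) → (V → K) // IsEvAut G f} → (G ≃g G) := fun f => (hσ f).choose
  have hpspec : ∀ f : {f : (V → K) → (V → K) // IsEvAut G f}, ∃ μ : V → K,
      (∀ i, μ i ≠ 0) ∧ ∀ i, (f : (V → K) → (V → K)) (Pi.single i 1)
        = μ i • (Pi.single (p f i) 1 : V → K) := fun f => (hσ f).choose_spec
  have hp_point : ∀ (f : {f : (V → K) → (V → K) // IsEvAut G f}) (μ : V → K) (σ' : V → V),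
      (∀ i, μ i ≠ 0) →
      (∀ i, (f : (V → K) → (V → K)) (Pi.single i 1) = μ i • (Pi.single (σ' i) 1 : V → K)) →
      ∀ i, p f i = σ' i := by
    intro f μ σ' hμ hfσ i
    obtain ⟨ν, hν, hfp⟩ := hpspec f
    exact single_eq_of_smul_eq (hν i) ((hfp i).symm.trans (hfσ i))
  have hpsurj : Function.Surjective p := by
    intro σ
    refine ⟨⟨fun x m => x (σ.symm m), perm_isEvAut G σ⟩, ?_⟩
    apply RelIso.ext
    intro i
    exact hp_point _ (fun _ => (1 : K)) (fun i => σ i) (fun _ => one_ne_zero)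
      (fun i => perm_single G σ i) i
  have hfin : Finite (G ≃g G) :=
    Finite.of_injective (fun σ => σ.toEquiv) RelIso.toEquiv_injective
  constructor
  · constructor
    · rintro ⟨φ, hφ⟩ f hf t ht hft
      have hpinj : Function.Injective p := by
        have h1 : Function.Surjective (p ∘ φ.symm) := hpsurj.comp φ.symm.surjective
        have h2 : Function.Injective (p ∘ φ.symm) := Finite.injective_iff_surjective.mpr h1
        intro a b hab
        have h3 : (p ∘ φ.symm) (φ a) = (p ∘ φ.symm) (φ b) := by
          simp only [Function.comp_apply, Equiv.symm_apply_apply]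
          exact hab
        exact φ.injective (h2 h3)
      have ha : p ⟨f, hf⟩ = p ⟨id, id_isEvAut G⟩ := by
        apply RelIso.ext
        intro i
        rw [hp_point ⟨f, hf⟩ t (fun i => i) ht hft i,
          hp_point ⟨id, id_isEvAut G⟩ (fun _ => (1 : K)) (fun i => i) (fun _ => one_ne_zero)
            (fun i => (one_smul K _).symm) i]
      exact congrArg Subtype.val (hpinj ha)
    · intro hD
      have hpinj : Function.Injective p := by
        rintro ⟨f, hf⟩ ⟨g, hg⟩ hab
        obtain ⟨μ, hμ0, hμ⟩ := hpspec ⟨f, hf⟩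
        obtain ⟨ν, hν0, hν⟩ := hpspec ⟨g, hg⟩
        rw [hab] at hμ
        set σ := p ⟨g, hg⟩ with hσdef
        have hμ' : ∀ i, f (Pi.single i 1) = μ i • (Pi.single (σ i) 1 : V → K) := hμ
        have hν' : ∀ i, g (Pi.single i 1) = ν i • (Pi.single (σ i) 1 : V → K) := hν
        set ginv : (V → K) → (V → K) := fun y i => (ν i)⁻¹ * y (σ i) with hginvdef
        have hgform : ∀ (x : V → K) m, g x m = ν (σ.symm m) * x (σ.symm m) :=
          sigma_diag_apply G hg.2.1 σ ν hν'
        have hgfinv : ∀ y, g (ginv y) = y := by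
          intro y; funext m
          rw [hgform]
          show ν (σ.symm m) * ((ν (σ.symm m))⁻¹ * y (σ (σ.symm m))) = y m
          rw [← mul_assoc, mul_inv_cancel₀ (hν0 _), one_mul, σ.apply_symm_apply]
        have hinvg : ∀ y, ginv (g y) = y := by
          intro y; funext i
          show (ν i)⁻¹ * g y (σ i) = y i
          rw [hgform, σ.symm_apply_apply, ← mul_assoc, inv_mul_cancel₀ (hν0 i), one_mul]
        have hginvaut : IsEvAut G ginv := inv_isEvAut G hg hinvg hgfinv
        have hcomp : IsEvAut G (ginv ∘ f) := comp_isEvAut G hginvaut hf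
        have hbasis : ∀ i, (ginv ∘ f) (Pi.single i 1)
            = (μ i * (ν i)⁻¹) • (Pi.single i 1 : V → K) := by
          intro i
          show ginv (f (Pi.single i 1)) = _
          rw [hμ' i]
          funext j
          show (ν j)⁻¹ * (μ i • (Pi.single (σ i) 1 : V → K)) (σ j)
            = ((μ i * (ν i)⁻¹) • (Pi.single i 1 : V → K)) j
          rw [Pi.smul_apply, smul_eq_mul, Pi.smul_apply, smul_eq_mul]
          by_cases h : j = i
          · subst h
            rw [Pi.single_eq_same, Pi.single_eq_same]
            ring
          · rw [Pi.single_eq_of_ne (fun he => h (σ.injective he)), Pi.single_eq_of_ne h]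
            ring
        have hid : ginv ∘ f = id :=
          hD (ginv ∘ f) hcomp (fun i => μ i * (ν i)⁻¹)
            (fun i => mul_ne_zero (hμ0 i) (inv_ne_zero (hν0 i))) hbasis
        have hfeqg : f = g := by
          funext x
          have h1 : ginv (f x) = x := congrFun hid x
          calc f x = g (ginv (f x)) := (hgfinv (f x)).symm
            _ = g x := by rw [h1]
        exact Subtype.ext hfeqg
      refine ⟨Equiv.ofBijective p ⟨hpinj, hpsurj⟩, ?_⟩
      intro f g h hcomp
      show p h = p f * p g
      obtain ⟨μ, hμ0, hμ⟩ := hpspec f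
      obtain ⟨ν, hν0, hν⟩ := hpspec g
      have hbasis : ∀ i, (h : (V → K) → (V → K)) (Pi.single i 1)
          = (ν i * μ (p g i)) • (Pi.single (p f (p g i)) 1 : V → K) := by
        intro i
        rw [hcomp]
        show (f : (V → K) → (V → K)) ((g : (V → K) → (V → K)) (Pi.single i 1)) = _
        rw [hν i, f.2.2.1.map_smul, hμ (p g i), smul_smul]
      apply RelIso.ext
      intro i
      rw [RelIso.mul_apply]
      exact hp_point h (fun i => ν i * μ (p g i)) (fun i => p f (p g i))
        (fun i => mul_ne_zero (hν0 i) (hμ0 _)) hbasis i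
  · constructor
    · intro hD hcol
      obtain ⟨c⟩ := hcol
      obtain ⟨ω, hω⟩ : ∃ ω : K, ω * ω + ω + 1 = 0 := by
        have hdeg : (Polynomial.X ^ 2 + Polynomial.X + 1 : Polynomial K).degree = 2 := by
          compute_degree!
        obtain ⟨ω, hω2⟩ := IsAlgClosed.exists_root
          (Polynomial.X ^ 2 + Polynomial.X + 1 : Polynomial K) (by rw [hdeg]; simp)
        rw [Polynomial.IsRoot.def, Polynomial.eval_add, Polynomial.eval_add,
          Polynomial.eval_pow, Polynomial.eval_X, Polynomial.eval_one] at hω2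
        exact ⟨ω, by linear_combination hω2⟩
      have hωne0 : ω ≠ 0 := by intro hz; rw [hz] at hω; norm_num at hω
      have hωne1 : ω ≠ 1 := by
        intro hz
        have h3 : (3 : K) = 0 := by linear_combination hω + (-ω - 2) * hz
        norm_num at h3
      have hω2ne1 : ω * ω ≠ 1 := by
        intro hz
        have h3 : (3 : K) = 0 := by linear_combination (2 - ω) * hω + (ω - 1) * hz
        norm_num at h3
      have hfin2 : ∀ a : Fin 2, a = 0 ∨ a = 1 := by decide
      have h01 : (1 : Fin 2) ≠ 0 := by decide
      set t : V → K := fun v => if c v = 0 then ω else ω * ω with hts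
      have ht0 : ∀ i, t i ≠ 0 := by
        intro i
        simp only [hts]
        split
        · exact hωne0
        · exact mul_ne_zero hωne0 hωne0
      have hE : ∀ i m, G.Adj i m → t i * t i = t m := by
        intro i m hadj
        have hne := c.valid hadj
        simp only [hts]
        rcases hfin2 (c i) with h1 | h1 <;> rcases hfin2 (c m) with h2 | h2
        · exact absurd (h1.trans h2.symm) hne
        · rw [if_pos h1, if_neg (fun hz => h01 (h2.symm.trans hz))]
        · rw [if_neg (fun hz => h01 (h1.symm.trans hz)), if_pos h2]
          linear_combination (ω * ω - ω) * hω
        · exact absurd (h1.trans h2.symm) hne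
      have hfaut := diag_isEvAut G t ht0 hE
      have hfbasis : ∀ i, (fun (x : V → K) m => t m * x m) (Pi.single i 1)
          = t i • (Pi.single i 1 : V → K) := by
        intro i; funext m
        show t m * (Pi.single i 1 : V → K) m = t i * (Pi.single i 1 : V → K) m
        by_cases h : m = i
        · subst h; rfl
        · rw [Pi.single_eq_of_ne h, mul_zero, mul_zero]
      have hid := hD _ hfaut t ht0 hfbasis
      obtain ⟨v⟩ := hconn.nonempty
      have h2 : t v = 1 := by
        have h3 := congrFun (congrFun hid (Pi.single v 1)) v
        simpa using h3
      simp only [hts] at h2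
      split at h2
      · exact hωne1 h2
      · exact hω2ne1 h2
    · intro hcol f hf t ht hft
      have hE := diag_edge G hf hft
      have hedge : ∃ a b, G.Adj a b := by
        by_contra hcon
        push_neg at hcon
        exact hcol ⟨SimpleGraph.Coloring.mk (fun _ => (0 : Fin 2))
          (fun {a b} hab => absurd hab (hcon a b))⟩
      have hnb : ∀ v : V, ∃ w, G.Adj v w := by
        intro v
        obtain ⟨a, b, hab⟩ := hedge
        rcases eq_or_ne v a with rfl | hva
        · exact ⟨b, hab⟩
        · obtain ⟨w⟩ := hconn.preconnected v a
          cases w with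
          | nil => exact absurd rfl hva
          | cons h _ => exact ⟨_, h⟩
      have hprop : ∀ (u v : V), G.Walk u v → t u = 1 → t v = 1 := by
        intro u v w
        induction w with
        | nil => exact id
        | cons h _ ih =>
          intro h1
          apply ih
          rw [← hE _ _ h, h1, mul_one]
      have hone : ∀ v, t v = 1 := by
        by_contra hcon
        push_neg at hcon
        obtain ⟨v0, hv0⟩ := hcon
        have hall : ∀ v, t v ≠ 1 := fun v hv =>
          hv0 (hprop v v0 (hconn.preconnected v v0).some hv)
        have hroot : ∀ v, t v * t v + t v + 1 = 0 := by
          intro v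
          obtain ⟨w, hw⟩ := hnb v
          have h1 := hE v w hw
          have h2 := hE w v hw.symm
          have h4 : t v * t v * (t v * t v) = t v := by rw [h1]; exact h2
          have h5 : t v * (t v * (t v * t v) - 1) = 0 := by linear_combination h4
          rcases mul_eq_zero.mp h5 with h | h
          · exact absurd h (ht v)
          · have h6 : (t v - 1) * (t v * t v + t v + 1) = 0 := by linear_combination h
            rcases mul_eq_zero.mp h6 with h7 | h7
            · exact absurd (sub_eq_zero.mp h7) (hall v)
            · exact h7
        have hdist : ∀ a b : K, a * a + a + 1 = 0 → b * b + b + 1 = 0 → a ≠ b →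
            b = -a - 1 := by
          intro a b ha hb hne
          have h2 : (a - b) * (a + b + 1) = 0 := by linear_combination ha - hb
          rcases mul_eq_zero.mp h2 with h | h
          · exact absurd (sub_eq_zero.mp h) hne
          · linear_combination h
        have hadjne : ∀ {a b : V}, G.Adj a b → t a ≠ t b := by
          intro a b hab he
          apply hall a
          have h1 := hE a b hab
          rw [← he] at h1
          have h2 : t a * (t a - 1) = 0 := by linear_combination h1
          rcases mul_eq_zero.mp h2 with h | h
          · exact absurd h (ht a)
          · exact sub_eq_zero.mp h
        have hvalid : ∀ {a b : V}, G.Adj a b →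
            (if t a = t v0 then (0 : Fin 2) else 1) ≠ (if t b = t v0 then 0 else 1) := by
          intro a b hab
          by_cases h1 : t a = t v0 <;> by_cases h2 : t b = t v0
          · exact absurd (h1.trans h2.symm) (hadjne hab)
          · simp [h1, h2]
          · simp [h1, h2]
          · exfalso
            have hb := hdist (t a) (t b) (hroot a) (hroot b) (hadjne hab)
            have hs := hdist (t a) (t v0) (hroot a) (hroot v0) h1
            exact h2 (hb.trans hs.symm)
        exact hcol ⟨SimpleGraph.Coloring.mk _ hvalid⟩
      funext x
      rw [diag_apply hf.2.1 hft x]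
      funext m
      rw [hone m, one_mul]
      rfl
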